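/- Let f ∈ ℂ[[λ,μ]] be symmetric, i.e. f(λ,μ) = f(μ,λ). Let C ∈ ℂ[[λ,μ]] be the unique formal power series with λμ(e^{λ+μ} − 1)·C(λ,μ) = (λ+μ)(e^{μ} − 1) − μ(e^{λ+μ} − 1), and let g ∈ ℂ[[λ,μ]] be the unique formal power series with (e^{λ} − 1)·g(λ,μ) = λ·f(λ,μ). Write ρ = −λ−μ. Then the following two identities in ℂ[[λ,μ]] are equivalent: (i) g(λ,μ)·(1 − μ·C(λ,μ)) + g(μ,ρ)·(1 + λ·C(λ,μ)) + g(ρ,λ) + C(λ,μ) = 0; (ii) λμ(λ+μ)·( f(λ,μ) + e^{μ}·f(μ,−λ−μ) + e^{−λ}·f(λ,−λ−μ) ) = λ(e^{μ} − 1) + μ(e^{−λ} − 1). -/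

import Mathlib

noncomputable section

open Finset MvPowerSeries

/-- Total degree of a monomial in two variables. -/
def deg (d : Fin 2 →₀ ℕ) : ℕ := d 0 + d 1

/-- Formal substitution `f(p, q)` of two polynomials `p`, `q` with zero constant term
for the variables of a two-variable formal power series `f`: the coefficient of a
monomial `d` in `f(p,q)` is `∑_{i,j} (coeff of λ^i μ^j in f) ⬝ (coeff of d in pⁱ·qʲ)`,
a finite sum since `coeff d (pⁱ·qʲ) = 0` whenever `i + j > deg d`. -/
def sub2 (p q : MvPolynomial (Fin 2) ℂ) (f : MvPowerSeries (Fin 2) ℂ) :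
    MvPowerSeries (Fin 2) ℂ :=
  fun d => ∑ ij ∈ Finset.range (deg d + 1) ×ˢ Finset.range (deg d + 1),
    MvPowerSeries.coeff (Finsupp.single 0 ij.1 + Finsupp.single 1 ij.2) f *
      MvPolynomial.coeff d (p ^ ij.1 * q ^ ij.2)

/-- The formal exponential `exp g = ∑ₖ gᵏ/k!` of a two-variable formal power series `g`
with zero constant term. -/
def expMv (g : MvPowerSeries (Fin 2) ℂ) : MvPowerSeries (Fin 2) ℂ :=
  fun d => ∑ k ∈ Finset.range (deg d + 1), MvPowerSeries.coeff d (g ^ k) / (k.factorial : ℂ)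

/-- `f(μ, −λ−μ)`. -/
def s₁ (f : MvPowerSeries (Fin 2) ℂ) : MvPowerSeries (Fin 2) ℂ :=
  sub2 (MvPolynomial.X 1) (-MvPolynomial.X 0 - MvPolynomial.X 1) f

/-- `f(λ, −λ−μ)`. -/
def s₂ (f : MvPowerSeries (Fin 2) ℂ) : MvPowerSeries (Fin 2) ℂ :=
  sub2 (MvPolynomial.X 0) (-MvPolynomial.X 0 - MvPolynomial.X 1) f

/-- `f(μ, λ)`. -/
def swapS (f : MvPowerSeries (Fin 2) ℂ) : MvPowerSeries (Fin 2) ℂ :=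
  sub2 (MvPolynomial.X 1) (MvPolynomial.X 0) f

/-- `f(−λ, −μ)`. -/
def negS (f : MvPowerSeries (Fin 2) ℂ) : MvPowerSeries (Fin 2) ℂ :=
  sub2 (-MvPolynomial.X 0) (-MvPolynomial.X 1) f

/-- Equation (1.5b), the compressed hexagon equation:
`λμ(λ+μ)·( f(λ,μ) + e^{μ}·f(μ,−λ−μ) + e^{−λ}·f(λ,−λ−μ) ) = λ(e^{μ} − 1) + μ(e^{−λ} − 1)`. -/
def Eq15b (f : MvPowerSeries (Fin 2) ℂ) : Prop :=
  (X 0 : MvPowerSeries (Fin 2) ℂ) * X 1 * (X 0 + X 1) *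
      (f + expMv (X 1) * s₁ f + expMv (-X 0) * s₂ f)
    = X 0 * (expMv (X 1) - 1) + X 1 * (expMv (-X 0) - 1)


/-!
Multiply the left side of (i) by `λμ(e^λ − 1)(e^μ − 1)(e^ρ − 1)` and eliminate `C`, `g`,
`g(μ,ρ)` and `g(ρ,λ)` by their defining relations; for the last two these are
`(e^λ − 1)·g = λ·f` with `(μ,ρ)`, resp. `(ρ,λ)`, substituted, together with `f(ρ,λ) = f(λ,ρ)`.
What comes out is `−(e^λ − 1)(e^μ − 1)e^{−λ}` times the difference of the two sides of (1.5b)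
with `λ` and `μ` interchanged. Power series over `ℂ` form an integral domain, so (i) holds iff
the interchanged (1.5b) does, and as `f` is symmetric the automorphism `λ ↔ μ` carries that
equation back to (1.5b).

The truncated coefficient sums defining `sub2` and `expMv` agree with `MvPowerSeries.subst` and
`PowerSeries.subst`, which supply their ring-homomorphism and composition laws.
-/

section

variable {σ R : Type*} [CommSemiring R] {a b : MvPowerSeries σ R}

lemma coeff_pow_mul_pow_eq_zero (ha : constantCoeff a = 0) (hb : constantCoeff b = 0)
    {d : σ →₀ ℕ} {i j : ℕ} (h : d.degree < i + j) : coeff d (a ^ i * b ^ j) = 0 := by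
  refine coeff_of_lt_order (lt_of_lt_of_le ?_ (le_order_mul ..))
  exact lt_of_lt_of_le (by exact_mod_cast h) (add_le_add
    (le_order_pow_of_constantCoeff_eq_zero i ha) (le_order_pow_of_constantCoeff_eq_zero j hb))

lemma coeff_pow_eq_zero (ha : constantCoeff a = 0) {d : σ →₀ ℕ} {k : ℕ} (h : d.degree < k) :
    coeff d (a ^ k) = 0 := by
  simpa using coeff_pow_mul_pow_eq_zero ha ha (j := 0) h

lemma constantCoeff_coe (r : MvPolynomial σ R) :
    constantCoeff (r : MvPowerSeries σ R) = r.constantCoeff := by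
  rw [← coeff_zero_eq_constantCoeff_apply, MvPolynomial.coeff_coe,
    MvPolynomial.constantCoeff_eq]

lemma X_ne_zero [Nontrivial R] (i : σ) : (X i : MvPowerSeries σ R) ≠ 0 := fun h => by
  simpa using congrArg (coeff (Finsupp.single i 1)) h

end

lemma exp_subst_X_add_X {A : Type*} [CommRing A] [Algebra ℚ A] :
    (PowerSeries.exp A).subst (X 0 + X 1 : MvPowerSeries (Fin 2) A) =
      (PowerSeries.exp A).subst (X 0 : MvPowerSeries (Fin 2) A) *
        (PowerSeries.exp A).subst (X 1 : MvPowerSeries (Fin 2) A) := by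
  ext e
  rw [PowerSeries.coeff_subst_X_zero_add_X_one, PowerSeries.coeff_subst_X_zero_subst_mul_X_one]
  simp only [PowerSeries.coeff_exp, ← map_natCast (algebraMap ℚ A), ← map_mul]
  congr 1
  have key : (e 0 + e 1).choose (e 0) * (e 0).factorial * (e 1).factorial
      = (e 0 + e 1).factorial := by
    rw [mul_assoc, mul_comm (e 0).factorial, ← mul_assoc, add_comm,
      Nat.add_choose_mul_factorial_mul_factorial, add_comm]
  field_simp
  exact_mod_cast key

lemma subst_powerSeries_subst {σ τ R : Type*} [CommRing R] {a : MvPowerSeries σ R}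
    (ha : PowerSeries.HasSubst a) {b : σ → MvPowerSeries τ R} (hb : HasSubst b)
    (f : PowerSeries R) : subst b (f.subst a) = f.subst (subst b a) :=
  subst_comp_subst_apply ha.const hb f

lemma degree_eq_deg (d : Fin 2 →₀ ℕ) : d.degree = deg d := by
  rw [Finsupp.degree_eq_sum, Fin.sum_univ_two, deg]

lemma coeff_expMv (t : MvPowerSeries (Fin 2) ℂ) (d : Fin 2 →₀ ℕ) :
    coeff d (expMv t) = ∑ k ∈ range (deg d + 1), coeff d (t ^ k) / (k.factorial : ℂ) := rfl

lemma expMv_eq_subst {t : MvPowerSeries (Fin 2) ℂ} (ht : constantCoeff t = 0) :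
    expMv t = (PowerSeries.exp ℂ).subst t := by
  ext d
  rw [coeff_expMv, PowerSeries.coeff_subst (PowerSeries.HasSubst.of_constantCoeff_zero ht),
    finsum_eq_sum_of_support_subset (s := range (deg d + 1)) _ ?_]
  · refine Finset.sum_congr rfl fun k _ => ?_
    simp [PowerSeries.coeff_exp, div_eq_inv_mul]
  · intro k hk
    rw [coe_range, Set.mem_Iio, Nat.lt_succ_iff]
    by_contra hlt
    exact hk (by dsimp only; rw [coeff_pow_eq_zero ht (by rw [degree_eq_deg]; omega), smul_zero])

lemma expMv_add {s t : MvPowerSeries (Fin 2) ℂ} (hs : constantCoeff s = 0)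
    (ht : constantCoeff t = 0) : expMv (s + t) = expMv s * expMv t := by
  have hst : HasSubst ![s, t] := hasSubst_of_constantCoeff_zero fun i => by
    fin_cases i <;> simpa
  have h := congrArg (subst ![s, t]) (exp_subst_X_add_X (A := ℂ))
  simp only [subst_mul hst, subst_add hst, subst_X hst, Matrix.cons_val_zero,
    Matrix.cons_val_one, subst_powerSeries_subst (.X _) hst,
    subst_powerSeries_subst (.of_constantCoeff_zero
      (by simp : constantCoeff (X 0 + X 1 : MvPowerSeries (Fin 2) ℂ) = 0)) hst] at h
  rwa [expMv_eq_subst hs, expMv_eq_subst ht, expMv_eq_subst (by simp [hs, ht])]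

lemma expMv_sub {s t : MvPowerSeries (Fin 2) ℂ} (hs : constantCoeff s = 0)
    (ht : constantCoeff t = 0) : expMv (s - t) = expMv s * expMv (-t) := by
  rw [sub_eq_add_neg, expMv_add hs (by simp [ht])]

lemma expMv_zero : expMv 0 = 1 := by
  rw [expMv_eq_subst (map_zero _)]
  exact subst_zero_eq_C_constantCoeff.trans
    (by rw [← map_one C]; exact congrArg C (PowerSeries.constantCoeff_exp (A := ℂ)))

lemma expMv_mul_expMv_neg {t : MvPowerSeries (Fin 2) ℂ} (ht : constantCoeff t = 0) :
    expMv t * expMv (-t) = 1 := by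
  rw [← expMv_add ht (by simp [ht]), add_neg_cancel, expMv_zero]

lemma expMv_sub_one_ne_zero {t : MvPowerSeries (Fin 2) ℂ} {i : Fin 2}
    (h : coeff (Finsupp.single i 1) t ≠ 0) : expMv t - 1 ≠ 0 := by
  intro h0
  have hd : deg (Finsupp.single i 1) = 1 := by fin_cases i <;> simp [deg]
  have := congrArg (coeff (Finsupp.single i 1)) h0
  rw [map_sub, coeff_expMv, hd] at this
  exact h (by simpa [Finset.sum_range_succ, coeff_one] using this)

section Substitution

variable {p q : MvPolynomial (Fin 2) ℂ}

lemma coeff_sub2 (p q : MvPolynomial (Fin 2) ℂ) (f : MvPowerSeries (Fin 2) ℂ)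
    (d : Fin 2 →₀ ℕ) :
    coeff d (sub2 p q f) = ∑ ij ∈ range (deg d + 1) ×ˢ range (deg d + 1),
      coeff (Finsupp.single 0 ij.1 + Finsupp.single 1 ij.2) f *
        MvPolynomial.coeff d (p ^ ij.1 * q ^ ij.2) := rfl

lemma hasSubst_pair (hp : p.constantCoeff = 0) (hq : q.constantCoeff = 0) :
    HasSubst ![(p : MvPowerSeries (Fin 2) ℂ), q] :=
  hasSubst_of_constantCoeff_zero fun s => by fin_cases s <;> simpa [constantCoeff_coe]

lemma sub2_eq_subst (hp : p.constantCoeff = 0) (hq : q.constantCoeff = 0)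
    (f : MvPowerSeries (Fin 2) ℂ) :
    sub2 p q f = subst ![(p : MvPowerSeries (Fin 2) ℂ), q] f := by
  ext d
  set D := deg d
  let mono : ℕ × ℕ → (Fin 2 →₀ ℕ) := fun ij => Finsupp.single 0 ij.1 + Finsupp.single 1 ij.2
  have mono_injOn : Set.InjOn mono ↑(range (D + 1) ×ˢ range (D + 1)) := by
    intro ij _ ij' _ h
    have h0 := congrArg (· 0) h
    have h1 := congrArg (· 1) h
    simp only [mono, Finsupp.add_apply, Finsupp.single_apply] at h0 h1
    exact Prod.ext (by simpa using h0) (by simpa using h1)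
  rw [coeff_sub2, coeff_subst (hasSubst_pair hp hq),
    finsum_eq_sum_of_support_subset (s := (range (D + 1) ×ˢ range (D + 1)).image mono) _ ?_,
    sum_image mono_injOn]
  · refine Finset.sum_congr rfl fun ij _ => ?_
    rw [smul_eq_mul, Finsupp.prod_fintype _ _ (fun _ => pow_zero _)]
    simp [mono, ← MvPolynomial.coe_pow, ← MvPolynomial.coe_mul, MvPolynomial.coeff_coe]
  · intro e he
    -- monomials `λ^i μ^j` with `i + j > deg d` do not reach the coefficient of `d`
    have hle : e 0 ≤ D ∧ e 1 ≤ D := by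
      by_contra hlt
      refine he ?_
      dsimp only
      rw [Finsupp.prod_fintype _ _ (fun _ => pow_zero _), Fin.prod_univ_two]
      simp only [Matrix.cons_val_zero, Matrix.cons_val_one]
      rw [coeff_pow_mul_pow_eq_zero (by simpa [constantCoeff_coe])
        (by simpa [constantCoeff_coe]) (by rw [degree_eq_deg]; omega), smul_zero]
    simp only [coe_image, coe_product, coe_range, Set.mem_image, Set.mem_prod, Set.mem_Iio]
    refine ⟨(e 0, e 1), ⟨by omega, by omega⟩, ?_⟩
    ext s
    fin_cases s <;> simp [mono]

def sub2Hom (hp : p.constantCoeff = 0) (hq : q.constantCoeff = 0) :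
    MvPowerSeries (Fin 2) ℂ →+* MvPowerSeries (Fin 2) ℂ :=
  (substAlgHom (hasSubst_pair hp hq)).toRingHom

lemma sub2Hom_apply (hp : p.constantCoeff = 0) (hq : q.constantCoeff = 0)
    (f : MvPowerSeries (Fin 2) ℂ) : sub2Hom hp hq f = sub2 p q f := by
  rw [sub2_eq_subst hp hq, ← coe_substAlgHom (hasSubst_pair hp hq)]
  rfl

lemma sub2_X0 (hp : p.constantCoeff = 0) (hq : q.constantCoeff = 0) :
    sub2 p q (X 0) = p := by
  rw [sub2_eq_subst hp hq, subst_X (hasSubst_pair hp hq)]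
  rfl

lemma sub2_X1 (hp : p.constantCoeff = 0) (hq : q.constantCoeff = 0) :
    sub2 p q (X 1) = q := by
  rw [sub2_eq_subst hp hq, subst_X (hasSubst_pair hp hq)]
  rfl

lemma sub2_X_X (f : MvPowerSeries (Fin 2) ℂ) :
    sub2 (MvPolynomial.X 0) (MvPolynomial.X 1) f = f := by
  rw [sub2_eq_subst (MvPolynomial.constantCoeff_X ℂ 0) (MvPolynomial.constantCoeff_X ℂ 1)]
  convert congrFun (subst_self (σ := Fin 2) (R := ℂ)) f
  · funext i
    fin_cases i <;> simp
  · rfl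

lemma sub2_expMv (hp : p.constantCoeff = 0) (hq : q.constantCoeff = 0)
    {t : MvPowerSeries (Fin 2) ℂ} (ht : constantCoeff t = 0) :
    sub2 p q (expMv t) = expMv (sub2 p q t) := by
  have hpq := hasSubst_pair hp hq
  rw [sub2_eq_subst hp hq, sub2_eq_subst hp hq, expMv_eq_subst ht,
    subst_powerSeries_subst (.of_constantCoeff_zero ht) hpq,
    expMv_eq_subst (constantCoeff_subst_eq_zero hpq
      (fun i => by fin_cases i <;> simpa [constantCoeff_coe]) ht)]

lemma coe_bind₁_pair (p' q' r : MvPolynomial (Fin 2) ℂ) :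
    ((MvPolynomial.bind₁ ![p', q'] r : MvPolynomial (Fin 2) ℂ) : MvPowerSeries (Fin 2) ℂ) =
      subst ![(p' : MvPowerSeries (Fin 2) ℂ), q'] (r : MvPowerSeries (Fin 2) ℂ) := by
  have hcoe : ∀ x : MvPolynomial (Fin 2) ℂ,
      MvPolynomial.coeToMvPowerSeries.algHom ℂ x = (x : MvPowerSeries (Fin 2) ℂ) := by
    simp [MvPolynomial.coeToMvPowerSeries.algHom_apply]
  rw [subst_coe, ← hcoe, MvPolynomial.bind₁, MvPolynomial.comp_aeval_apply]
  congr 2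
  funext i
  fin_cases i <;> exact hcoe _

lemma sub2_sub2 (hp : p.constantCoeff = 0) (hq : q.constantCoeff = 0)
    {p' q' : MvPolynomial (Fin 2) ℂ} (hp' : p'.constantCoeff = 0) (hq' : q'.constantCoeff = 0)
    (f : MvPowerSeries (Fin 2) ℂ) :
    sub2 p' q' (sub2 p q f) =
      sub2 (MvPolynomial.bind₁ ![p', q'] p) (MvPolynomial.bind₁ ![p', q'] q) f := by
  have hpq := hasSubst_pair hp hq
  have hpq' := hasSubst_pair hp' hq'
  have hbind : ∀ r : MvPolynomial (Fin 2) ℂ, r.constantCoeff = 0 →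
      (MvPolynomial.bind₁ ![p', q'] r).constantCoeff = 0 := fun r hr => by
    have h := constantCoeff_subst_eq_zero hpq'
      (fun i => by fin_cases i <;> simpa [constantCoeff_coe])
      (show constantCoeff (r : MvPowerSeries (Fin 2) ℂ) = 0 by rwa [constantCoeff_coe])
    rwa [← coe_bind₁_pair, constantCoeff_coe] at h
  rw [sub2_eq_subst hp hq, sub2_eq_subst hp' hq', subst_comp_subst_apply hpq hpq',
    sub2_eq_subst (hbind p hp) (hbind q hq)]
  congr 1
  funext i
  fin_cases i <;> exact (coe_bind₁_pair _ _ _).symm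

lemma expMv_sub_one_mul_sub2 (hp : p.constantCoeff = 0) (hq : q.constantCoeff = 0)
    {f g : MvPowerSeries (Fin 2) ℂ} (h : (expMv (X 0) - 1) * g = X 0 * f) :
    (expMv p - 1) * sub2 p q g = p * sub2 p q f := by
  simpa only [map_mul, map_sub, map_one, sub2Hom_apply, sub2_expMv hp hq (constantCoeff_X 0),
    sub2_X0 hp hq] using congrArg (sub2Hom hp hq) h

end Substitution

lemma sub2_swapS {p q : MvPolynomial (Fin 2) ℂ} (hp : p.constantCoeff = 0)
    (hq : q.constantCoeff = 0) (f : MvPowerSeries (Fin 2) ℂ) :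
    sub2 p q (swapS f) = sub2 q p f := by
  rw [swapS, sub2_sub2 (MvPolynomial.constantCoeff_X ℂ 1) (MvPolynomial.constantCoeff_X ℂ 0)
    hp hq]
  simp

lemma swapS_swapS (f : MvPowerSeries (Fin 2) ℂ) : swapS (swapS f) = f := by
  rw [swapS, sub2_swapS (MvPolynomial.constantCoeff_X ℂ 1) (MvPolynomial.constantCoeff_X ℂ 0),
    sub2_X_X]

lemma swapS_s₁ (f : MvPowerSeries (Fin 2) ℂ) : swapS (s₁ f) = s₂ f := by
  rw [swapS, s₁, sub2_sub2 (MvPolynomial.constantCoeff_X ℂ 1) (by simp)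
    (MvPolynomial.constantCoeff_X ℂ 1) (MvPolynomial.constantCoeff_X ℂ 0), s₂]
  congr 1 <;> simp [sub_eq_add_neg, add_comm]

lemma swapS_s₂ (f : MvPowerSeries (Fin 2) ℂ) : swapS (s₂ f) = s₁ f := by
  rw [swapS, s₂, sub2_sub2 (MvPolynomial.constantCoeff_X ℂ 0) (by simp)
    (MvPolynomial.constantCoeff_X ℂ 1) (MvPolynomial.constantCoeff_X ℂ 0), s₁]
  congr 1 <;> simp [sub_eq_add_neg, add_comm]

lemma eq15b_iff_swapped {f : MvPowerSeries (Fin 2) ℂ} (hf : swapS f = f) :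
    Eq15b f ↔ X 0 * X 1 * (X 0 + X 1) * (f + expMv (-X 1) * s₁ f + expMv (X 0) * s₂ f) =
      X 0 * (expMv (-X 1) - 1) + X 1 * (expMv (X 0) - 1) := by
  have h1 := MvPolynomial.constantCoeff_X ℂ (1 : Fin 2)
  have h0 := MvPolynomial.constantCoeff_X ℂ (0 : Fin 2)
  set τ := sub2Hom h1 h0
  have hτ : ∀ h, τ h = swapS h := sub2Hom_apply h1 h0
  have hX0 : τ (X 0) = X 1 := by rw [hτ, swapS, sub2_X0 h1 h0, MvPolynomial.coe_X]
  have hX1 : τ (X 1) = X 0 := by rw [hτ, swapS, sub2_X1 h1 h0, MvPolynomial.coe_X]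
  have hexp : ∀ t, constantCoeff t = 0 → τ (expMv t) = expMv (τ t) := fun t ht => by
    rw [hτ, hτ, swapS, swapS, sub2_expMv h1 h0 ht]
  have hinj : Function.Injective τ := fun a b hab => by
    simpa only [hτ, swapS_swapS] using congrArg swapS hab
  rw [Eq15b, ← hinj.eq_iff]
  simp only [map_mul, map_add, map_sub, map_one, map_neg, hexp _ (constantCoeff_X 1),
    hexp _ (by simp : constantCoeff (-X 0 : MvPowerSeries (Fin 2) ℂ) = 0), hX0, hX1,
    hτ f, hτ (s₁ f), hτ (s₂ f), swapS_s₁, swapS_s₂, hf]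
  constructor <;> intro h <;> linear_combination h

/-- In the application `x, y, a, b, a', b'` are `λ, μ, e^λ, e^μ, e^{-λ}, e^{-μ}`, and
`f₁, f₂, g₁, g₂` are `f(μ,ρ), f(λ,ρ), g(μ,ρ), g(ρ,λ)`. -/
lemma hexagon_iff {R : Type*} [CommRing R] [IsDomain R] {x y a b a' b' C f f₁ f₂ g g₁ g₂ : R}
    (hx : x ≠ 0) (hy : y ≠ 0) (ha : a - 1 ≠ 0) (hb : b - 1 ≠ 0) (hab : a' * b' - 1 ≠ 0)
    (haa : a * a' = 1) (hbb : b * b' = 1)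
    (hC : x * y * (a * b - 1) * C = (x + y) * (b - 1) - y * (a * b - 1))
    (hg : (a - 1) * g = x * f) (hg₁ : (b - 1) * g₁ = y * f₁)
    (hg₂ : (a' * b' - 1) * g₂ = (-x - y) * f₂) :
    g * (1 - y * C) + g₁ * (1 + x * C) + g₂ + C = 0 ↔
      x * y * (x + y) * (f + b' * f₁ + a * f₂) = x * (b' - 1) + y * (a - 1) := by
  have habab : a * b * (a' * b') = 1 := by linear_combination b * b' * haa + hbb
  have key : x * y * (a - 1) * (b - 1) * (a' * b' - 1) *
        (g * (1 - y * C) + g₁ * (1 + x * C) + g₂ + C) =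
      -((a - 1) * (b - 1) * a' *
        (x * y * (x + y) * (f + b' * f₁ + a * f₂) - (x * (b' - 1) + y * (a - 1)))) := by
    linear_combination (x * y * (b - 1) * (a' * b' - 1) * (1 - y * C)) * hg
      + (x * y * (a - 1) * (a' * b' - 1) * (1 + x * C)) * hg₁
      + (x * y * (a - 1) * (b - 1)) * hg₂
      + (-((a - 1) * (b - 1) - x * y * (b - 1) * f + x * y * (a - 1) * f₁) * (a' * b')) * hC
      + (((a - 1) * (b - 1) - x * y * (b - 1) * f + x * y * (a - 1) * f₁) * (x * y * C + y))
        * habab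
      + (x * y * (x + y) * (b - 1) * f + x * y * (x + y) * (a - 1) * (b - 1) * f₂
        - y * (a - 1) * (b - 1)) * haa
      + (x * y * (x + y) * (b - 1) * a' * f - (x + y) * (a - 1) * (b - 1) * a') * hbb
  have hA : x * y * (a - 1) * (b - 1) * (a' * b' - 1) ≠ 0 := by simp [hx, hy, ha, hb, hab]
  have hB : (a - 1) * (b - 1) * a' ≠ 0 := by simp [ha, hb, right_ne_zero_of_mul_eq_one haa]
  rw [← mul_right_inj' hA, mul_zero, key, neg_eq_zero, mul_eq_zero, or_iff_right hB, sub_eq_zero]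

lemma coe_neg_X_sub_X :
    ((-MvPolynomial.X 0 - MvPolynomial.X 1 : MvPolynomial (Fin 2) ℂ) : MvPowerSeries (Fin 2) ℂ) =
      -X 0 - X 1 := by
  rw [← MvPolynomial.coeToMvPowerSeries.ringHom_apply, map_sub, map_neg]
  simp

/-- for symmetric `f`, with `C` the generating function of the extended
Bernoulli numbers (characterized by its defining identity) and `g` determined by
`(e^{λ} − 1)·g = λ·f`, the identity (i) of Proposition 3.9 is equivalent to the
compressed hexagon equation (1.5b). -/
theorem hexagon_equiv (f C g : MvPowerSeries (Fin 2) ℂ)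
    (hf : swapS f = f)
    (hC : (X 0 : MvPowerSeries (Fin 2) ℂ) * X 1 * (expMv (X 0 + X 1) - 1) * C
        = (X 0 + X 1) * (expMv (X 1) - 1) - X 1 * (expMv (X 0 + X 1) - 1))
    (hg : (expMv (X 0) - 1) * g = X 0 * f) :
    (g * (1 - X 1 * C) + s₁ g * (1 + X 0 * C)
        + sub2 (-MvPolynomial.X 0 - MvPolynomial.X 1) (MvPolynomial.X 0) g + C = 0)
      ↔ Eq15b f := by
  have h0 := MvPolynomial.constantCoeff_X ℂ (0 : Fin 2)
  have h1 := MvPolynomial.constantCoeff_X ℂ (1 : Fin 2)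
  have hρ : (-MvPolynomial.X 0 - MvPolynomial.X 1 : MvPolynomial (Fin 2) ℂ).constantCoeff = 0 := by
    simp
  have hg₁ := expMv_sub_one_mul_sub2 h1 hρ hg
  rw [MvPolynomial.coe_X] at hg₁
  have hg₂ := expMv_sub_one_mul_sub2 hρ h0 hg
  rw [← sub2_swapS h0 hρ f, hf, coe_neg_X_sub_X, expMv_sub (by simp) (constantCoeff_X 1)] at hg₂
  rw [expMv_add (constantCoeff_X 0) (constantCoeff_X 1)] at hC
  have : IsDomain (MvPowerSeries (Fin 2) ℂ) := NoZeroDivisors.to_isDomain _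
  rw [eq15b_iff_swapped hf]
  refine hexagon_iff (X_ne_zero 0) (X_ne_zero 1) (expMv_sub_one_ne_zero (i := 0) (by simp))
    (expMv_sub_one_ne_zero (i := 1) (by simp)) ?_ (expMv_mul_expMv_neg (constantCoeff_X 0))
    (expMv_mul_expMv_neg (constantCoeff_X 1)) hC hg hg₁ hg₂
  rw [← expMv_sub (by simp) (constantCoeff_X 1)]
  exact expMv_sub_one_ne_zero (i := 0) (by simp [coeff_X, Finsupp.single_eq_single_iff])

end
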